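/- If h_1,…,h_m : ℝⁿ → ℝ are continuously differentiable, then ψ̃(z) = (1/2)·(∏_{i=1}^m [h_i(z)]₊)² is differentiable with gradient ∇ψ̃(z) = Σ_{i=1}^m [h_i(z)]₊ · (∏_{j≠i} [h_j(z)]₊²) · ∇h_i(z). -/

import Mathlib

/-! Squaring flattens the kink of `[w]₊` at `0`, so `w ↦ [w]₊²` is differentiable with derivative
`2 [w]₊`; the gradient formula is then the chain rule followed by the product rule applied to
`ψ̃ = ½ ∏ᵢ [hᵢ]₊²`. -/

open Filter Topology Asymptotics

theorem hasDerivAt_max_zero_sq (w : ℝ) :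
    HasDerivAt (fun x : ℝ => max x 0 ^ 2) (2 * max w 0) w := by
  rcases lt_trichotomy w 0 with hw | rfl | hw
  · have hzero : (fun x : ℝ => max x 0 ^ 2) =ᶠ[𝓝 w] fun _ => 0 := by
      filter_upwards [eventually_lt_nhds hw] with x hx
      simp [max_eq_right hx.le]
    rw [max_eq_right hw.le, mul_zero]
    exact (hasDerivAt_const w 0).congr_of_eventuallyEq hzero
  · -- `0 ≤ (max x 0)^2 ≤ x^2 = o(x)`
    rw [max_self, mul_zero, hasDerivAt_iff_isLittleO_nhds_zero]
    refine (IsBigO.of_bound 1 (Eventually.of_forall fun x => ?_)).trans_isLittleO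
      (isLittleO_pow_id one_lt_two)
    have hle : max x 0 ^ 2 ≤ x ^ 2 := by
      simpa only [sq_abs] using
        pow_le_pow_left₀ (le_max_right x 0) (max_le (le_abs_self x) (abs_nonneg x)) 2
    simpa [abs_of_nonneg (sq_nonneg x)] using hle
  · have hsq : (fun x : ℝ => max x 0 ^ 2) =ᶠ[𝓝 w] fun x => x ^ 2 := by
      filter_upwards [eventually_gt_nhds hw] with x hx
      simp [max_eq_left hx.le]
    rw [max_eq_left hw.le]
    simpa using (hasDerivAt_pow 2 w).congr_of_eventuallyEq hsq

theorem HasFDerivAt.max_zero_sq {E : Type*} [NormedAddCommGroup E] [NormedSpace ℝ E]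
    {u : E → ℝ} {u' : E →L[ℝ] ℝ} {z : E} (hu : HasFDerivAt u u' z) :
    HasFDerivAt (fun x => max (u x) 0 ^ 2) ((2 * max (u z) 0) • u') z :=
  (hasDerivAt_max_zero_sq (u z)).comp_hasFDerivAt z hu

theorem HasGradientAt.half_sq_prod_max_zero {ι F : Type*} [DecidableEq ι]
    [NormedAddCommGroup F] [InnerProductSpace ℝ F] [CompleteSpace F]
    {s : Finset ι} {u : ι → F → ℝ} {g : ι → F} {z : F}
    (hu : ∀ i ∈ s, HasGradientAt (u i) (g i) z) :
    HasGradientAt (fun x => (1 / 2 : ℝ) * (∏ i ∈ s, max (u i x) 0) ^ 2)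
      (∑ i ∈ s, (max (u i z) 0 * ∏ j ∈ s.erase i, max (u j z) 0 ^ 2) • g i) z := by
  have hprod := (HasFDerivAt.finsetProd fun i hi => (hu i hi).hasFDerivAt.max_zero_sq).const_mul
    (1 / 2 : ℝ)
  simp only [Finset.prod_pow] at hprod
  refine hprod.congr_fderiv ?_
  simp only [map_sum, map_smul, Finset.smul_sum, smul_smul, Finset.prod_pow]
  refine Finset.sum_congr rfl fun i _ => ?_
  congr 1
  ring

theorem quadratic_penalty_gradient_general (n m : ℕ)
    (h : Fin m → EuclideanSpace ℝ (Fin n) → ℝ)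
    (g : Fin m → EuclideanSpace ℝ (Fin n) → EuclideanSpace ℝ (Fin n))
    (hg : ∀ i z, HasGradientAt (h i) (g i z) z) :
    Differentiable ℝ (fun z => (1 / 2 : ℝ) * (∏ i, max (h i z) 0) ^ 2) ∧
      ∀ z, HasGradientAt (fun z => (1 / 2 : ℝ) * (∏ i, max (h i z) 0) ^ 2)
        (∑ i, (max (h i z) 0 *
            ∏ j ∈ Finset.univ.erase i, (max (h j z) 0) ^ 2) • g i z) z := by
  have hgrad z := HasGradientAt.half_sq_prod_max_zero fun i (_ : i ∈ Finset.univ) => hg i z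
  exact ⟨fun z => (hgrad z).differentiableAt, hgrad⟩

theorem quadratic_penalty_gradient (n m : ℕ)
    (h : Fin m → EuclideanSpace ℝ (Fin n) → ℝ)
    (hh : ∀ i, ContDiff ℝ 1 (h i))
    (g : Fin m → EuclideanSpace ℝ (Fin n) → EuclideanSpace ℝ (Fin n))
    (hg : ∀ i z, HasGradientAt (h i) (g i z) z) :
    Differentiable ℝ (fun z => (1 / 2 : ℝ) * (∏ i, max (h i z) 0) ^ 2) ∧
      ∀ z, HasGradientAt (fun z => (1 / 2 : ℝ) * (∏ i, max (h i z) 0) ^ 2)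
        (∑ i, (max (h i z) 0 *
            ∏ j ∈ Finset.univ.erase i, (max (h j z) 0) ^ 2) • g i z) z :=
  quadratic_penalty_gradient_general n m h g hg
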